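/- arXiv:1702.05471 — 3 statements merged into one kernel-verified Lean document; each statement's English description precedes it below -/
import Mathlib

section
/- Let K be a p×p real PSD matrix with unit diagonal. Then for every j ≥ 1, the j-th Hadamard power K^{∘j} can be written as a finite sum Σ_k E_k K E_k over diagonal matrices E_k satisfying Σ_k E_k² = I. -/
open Matrix

/-- Entrywise (Hadamard) `j`-th power of a matrix. -/
def hadamardPow {p : ℕ} (K : Matrix (Fin p) (Fin p) ℝ) (j : ℕ) :
    Matrix (Fin p) (Fin p) ℝ :=
  Matrix.of fun i i' => (K i i') ^ j

open Finset

/-!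
Factor `K = Uᵀ U` and let `u_i` be the `i`-th column of `U`, a unit vector. Then
`K(i,i')^(j-1) = ⟪u_i^{⊗(j-1)}, u_{i'}^{⊗(j-1)}⟫`, so taking for `E_t` the diagonal matrix of the
`t`-th coordinates of the tensor powers `u_i^{⊗(j-1)}` gives `Σ_t E_t K E_t = K ∘ K^{∘(j-1)}`, while
`Σ_t E_t² = diag ‖u_i‖^{2(j-1)} = I`.
-/

section

variable {ι κ τ R : Type*} [CommSemiring R]

def colTensorPow (U : Matrix κ ι R) (n : ℕ) (t : Fin n → κ) (i : ι) : R :=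
  ∏ m, U (t m) i

theorem sum_colTensorPow_mul [Fintype κ] (U : Matrix κ ι R) (n : ℕ) (i i' : ι) :
    ∑ t, colTensorPow U n t i * colTensorPow U n t i' = (Uᵀ * U) i i' ^ n := by
  classical
  simp only [colTensorPow, ← prod_mul_distrib, mul_apply, transpose_apply, sum_pow',
    Fintype.piFinset_univ]

variable [Fintype τ] [Fintype ι] [DecidableEq ι]

theorem sum_diagonal_mul_mul_diagonal (K : Matrix ι ι R) (w : τ → ι → R) :
    ∑ t, diagonal (w t) * K * diagonal (w t) = of fun i i' => K i i' * ∑ t, w t i * w t i' := by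
  ext i i'
  simp only [Matrix.sum_apply, mul_diagonal, diagonal_mul, of_apply, mul_sum]
  exact sum_congr rfl fun t _ => by ring

theorem sum_diagonal_sq (w : τ → ι → R) :
    ∑ t, diagonal (w t) ^ 2 = diagonal fun i => ∑ t, w t i * w t i := by
  simp only [sq, diagonal_mul_diagonal]
  ext i i'
  rcases eq_or_ne i i' with rfl | h
  · simp [Matrix.sum_apply]
  · simp [Matrix.sum_apply, h]

end

theorem stmt5 {p : ℕ} (K : Matrix (Fin p) (Fin p) ℝ) (hK : K.PosSemidef)
    (hdiag : ∀ i, K i i = 1) (j : ℕ) (hj : 1 ≤ j) :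
    ∃ E : Fin (p ^ (j - 1)) → (Fin p → ℝ),
      (hadamardPow K j =
        ∑ k, Matrix.diagonal (E k) * K * Matrix.diagonal (E k)) ∧
      (∑ k, Matrix.diagonal (E k) ^ 2 = (1 : Matrix (Fin p) (Fin p) ℝ)) := by
  obtain ⟨n, rfl⟩ : ∃ n, j = n + 1 := ⟨j - 1, by omega⟩
  obtain ⟨U, hU⟩ : ∃ U : Matrix (Fin p) (Fin p) ℝ, K = Uᵀ * U := by
    open scoped MatrixOrder in
    obtain ⟨U, hU⟩ := CStarAlgebra.nonneg_iff_eq_star_mul_self.mp hK.nonneg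
    exact ⟨U, by rw [hU, star_eq_conjTranspose, conjTranspose_eq_transpose_of_trivial]⟩
  rw [Nat.add_sub_cancel]
  refine ⟨fun k => colTensorPow U n (finFunctionFinEquiv.symm k), ?_, ?_⟩ <;> beta_reduce
  · rw [finFunctionFinEquiv.symm.sum_comp (fun t => diagonal (colTensorPow U n t) * K *
      diagonal (colTensorPow U n t)), sum_diagonal_mul_mul_diagonal]
    ext i i'
    simp only [hadamardPow, of_apply, sum_colTensorPow_mul, ← hU, pow_succ']
  · rw [finFunctionFinEquiv.symm.sum_comp (fun t => diagonal (colTensorPow U n t) ^ 2),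
      sum_diagonal_sq]
    simp only [sum_colTensorPow_mul, ← hU, hdiag, one_pow, diagonal_one]
end

section
/- Let K be a p×p real PSD matrix with unit diagonal, and let X = Σ_{j=1}^N D_j K^{∘j} D_j where the D_j are diagonal matrices with Σ_{j=1}^N D_j² = I. Then the eigenvalue vector of K majorizes the eigenvalue vector of X. -/
/-!
Ky Fan's principle: the sum of the `q` largest eigenvalues of a symmetric `A` is the maximum of
`tr (Q A)` over `0 ≤ Q ≤ 1` with `tr Q = q`. The map `Φ Q = ∑ j, (D_j Q D_j) ⊙ K^{∘j}` is positive
(Schur product theorem), unital and trace-preserving (unit diagonals and `∑ D_j² = 1`), and it is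
dual to the map producing `X`: `tr (Q X) = tr (Φ Q * K)`. Hence `Φ` sends a maximiser for `X` to an
admissible `Q` for `K`. For `q = p` both sides are traces, and `tr X = tr (Φ 1 * K) = tr K`.
-/

/-- Eigenvalues of a Hermitian real matrix, sorted in decreasing order. -/
noncomputable def sortedEigs {p : ℕ} (K : Matrix (Fin p) (Fin p) ℝ) (hK : K.IsHermitian) : List ℝ :=
  (List.ofFn hK.eigenvalues).mergeSort (· ≥ ·)

/-- Sum of the top `q` eigenvalues (the `q`-Ky Fan norm for PSD matrices). -/
noncomputable def topSum {p : ℕ} (K : Matrix (Fin p) (Fin p) ℝ) (hK : K.IsHermitian) (q : ℕ) : ℝ :=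
  ((sortedEigs K hK).take q).sum

open Matrix Finset

theorem sum_mul_le_sum_of_threshold {ι : Type*} [Fintype ι] {S : Finset ι} {g c : ι → ℝ}
    {t : ℝ} (hS : ∀ i ∈ S, t ≤ g i) (hSc : ∀ i ∉ S, g i ≤ t)
    (hc0 : ∀ i, 0 ≤ c i) (hc1 : ∀ i, c i ≤ 1) (hc : ∑ i, c i = #S) :
    ∑ i, g i * c i ≤ ∑ i ∈ S, g i := by
  classical
  have hin : ∑ i ∈ S, g i * c i ≤ ∑ i ∈ S, (g i - t + t * c i) :=
    sum_le_sum fun i hi => by nlinarith [hS i hi, hc1 i]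
  have hout : ∑ i ∈ Sᶜ, g i * c i ≤ ∑ i ∈ Sᶜ, t * c i :=
    sum_le_sum fun i hi => mul_le_mul_of_nonneg_right (hSc i (mem_compl.1 hi)) (hc0 i)
  rw [← sum_add_sum_compl S] at hc ⊢
  simp only [sum_add_distrib, sum_sub_distrib, sum_const, nsmul_eq_mul, ← mul_sum] at hin hout
  linear_combination hin + hout + t * hc

section KyFan

variable {n : Type*} [Fintype n] [DecidableEq n] {A : Matrix n n ℝ}

theorem trace_mul_eq_sum_eigenvalues_mul (hA : A.IsHermitian) (Q : Matrix n n ℝ) :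
    (Q * A).trace = ∑ i, hA.eigenvalues i *
      (star (hA.eigenvectorUnitary : Matrix n n ℝ) * Q *
        (hA.eigenvectorUnitary : Matrix n n ℝ)) i i := by
  set U : Matrix n n ℝ := ↑hA.eigenvectorUnitary
  have hspec : A = U * diagonal hA.eigenvalues * star U := by simpa using hA.spectral_theorem
  conv_lhs => rw [hspec]
  rw [show Q * (U * diagonal hA.eigenvalues * star U) = Q * U * diagonal hA.eigenvalues * star U by
    noncomm_ring, trace_mul_cycle, trace]
  refine sum_congr rfl fun i _ => ?_
  rw [diag_apply, mul_diagonal, ← mul_assoc, mul_comm]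

theorem exists_posSemidef_trace_mul_eq (hA : A.IsHermitian) (S : Finset n) :
    ∃ Q : Matrix n n ℝ, Q.PosSemidef ∧ (1 - Q).PosSemidef ∧
      Q.trace = #S ∧ (Q * A).trace = ∑ i ∈ S, hA.eigenvalues i := by
  set U : Matrix n n ℝ := ↑hA.eigenvectorUnitary
  have hUU : star U * U = 1 := hA.eigenvectorUnitary.2.1
  have hUU' : U * star U = 1 := hA.eigenvectorUnitary.2.2
  set χ : n → ℝ := fun i => if i ∈ S then 1 else 0
  have hconj : ∀ v : n → ℝ, 0 ≤ v → (U * diagonal v * star U).PosSemidef := fun v hv => by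
    simpa [star_eq_conjTranspose] using (PosSemidef.diagonal hv).mul_mul_conjTranspose_same U
  refine ⟨U * diagonal χ * star U, hconj χ fun i => by positivity, ?_, ?_, ?_⟩
  · have : 1 - U * diagonal χ * star U = U * diagonal (1 - χ) * star U := by
      rw [show diagonal (1 - χ) = 1 - diagonal χ by rw [← diagonal_one, diagonal_sub]; rfl,
        mul_sub, sub_mul, mul_one, hUU']
    rw [this]
    exact hconj _ fun i => by by_cases h : i ∈ S <;> simp [χ, h]
  · rw [trace_mul_cycle, hUU, one_mul, trace_diagonal]
    simp [χ]
  · rw [trace_mul_eq_sum_eigenvalues_mul hA,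
      show star U * (U * diagonal χ * star U) * U = (star U * U) * diagonal χ * (star U * U) by
        noncomm_ring, hUU, one_mul, mul_one]
    simp [χ]

end KyFan

section TopSum

variable {p : ℕ} {A : Matrix (Fin p) (Fin p) ℝ}

theorem sortedEigs_eq_ofFn_eigenvalues₀ (hA : A.IsHermitian) :
    sortedEigs A hA = List.ofFn hA.eigenvalues₀ := by
  rw [← hA.sort_roots_charpoly_eq_eigenvalues₀, hA.roots_charpoly_eq_eigenvalues, sortedEigs]
  simp only [Fin.univ_val_map, Multiset.map_coe, List.map_ofFn, Function.comp_def,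
    RCLike.ofReal_real_eq_id, id_eq, RCLike.re_to_real, Multiset.coe_sort]

theorem topSum_card_eq_trace (hA : A.IsHermitian) : topSum A hA p = A.trace := by
  have hlen : (sortedEigs A hA).length = p := by simp [sortedEigs]
  rw [topSum, List.take_of_length_le hlen.le, sortedEigs,
    (List.mergeSort_perm _ _).sum_eq, List.sum_ofFn, hA.trace_eq_sum_eigenvalues]
  rfl

theorem exists_topSum_eq_sum_eigenvalues (hA : A.IsHermitian) {q : ℕ} (hq1 : 1 ≤ q)
    (hqp : q ≤ p) :
    ∃ (S : Finset (Fin p)) (t : ℝ), #S = q ∧ topSum A hA q = ∑ i ∈ S, hA.eigenvalues i ∧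
      (∀ i ∈ S, t ≤ hA.eigenvalues i) ∧ ∀ i ∉ S, hA.eigenvalues i ≤ t := by
  -- `hA.eigenvalues` is the antitone `hA.eigenvalues₀` reindexed along an unspecified `e`.
  set e := Fintype.equivOfCardEq (Fintype.card_fin (Fintype.card (Fin p)))
  set T : Finset (Fin (Fintype.card (Fin p))) := {k | (k : ℕ) < q}
  have he : ∀ i, hA.eigenvalues i = hA.eigenvalues₀ (e.symm i) := fun _ => rfl
  have hcard : Fintype.card (Fin p) = p := Fintype.card_fin p
  have hmem : ∀ i, i ∈ T.map e.toEmbedding ↔ (e.symm i : ℕ) < q := by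
    simp [T, mem_map_equiv]
  refine ⟨T.map e.toEmbedding, hA.eigenvalues₀ ⟨q - 1, by omega⟩, ?_, ?_, ?_, ?_⟩
  · rw [card_map, Fin.card_filter_val_lt]; omega
  · rw [topSum, sortedEigs_eq_ofFn_eigenvalues₀, List.sum_take_ofFn, sum_map]
    simp [he, T]
  · intro i hi
    have hi' : (e.symm i : ℕ) ≤ q - 1 := by have := (hmem i).1 hi; omega
    rw [he]
    exact hA.eigenvalues₀_antitone (Fin.le_def.2 hi')
  · intro i hi
    have hi' : q - 1 ≤ (e.symm i : ℕ) := by have := mt (hmem i).2 hi; omega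
    rw [he]
    exact hA.eigenvalues₀_antitone (Fin.le_def.2 hi')

theorem trace_mul_le_topSum (hA : A.IsHermitian) {Q : Matrix (Fin p) (Fin p) ℝ}
    (hQ : Q.PosSemidef) (hQ1 : (1 - Q).PosSemidef) {q : ℕ} (hq1 : 1 ≤ q) (hqp : q ≤ p)
    (htr : Q.trace = q) :
    (Q * A).trace ≤ topSum A hA q := by
  set U : Matrix (Fin p) (Fin p) ℝ := ↑hA.eigenvectorUnitary
  have hUU : star U * U = 1 := hA.eigenvectorUnitary.2.1
  have hUU' : U * star U = 1 := hA.eigenvectorUnitary.2.2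
  have hconj : ∀ {P : Matrix (Fin p) (Fin p) ℝ}, P.PosSemidef → (star U * P * U).PosSemidef :=
    fun hP => by simpa [star_eq_conjTranspose] using hP.conjTranspose_mul_mul_same U
  have hc1 : ∀ i, (star U * Q * U) i i ≤ 1 := fun i => by
    have := (hconj hQ1).diag_nonneg (i := i)
    rwa [mul_sub, sub_mul, mul_one, hUU, Matrix.sub_apply, one_apply_eq, sub_nonneg] at this
  have hc : (star U * Q * U).trace = q := by
    rw [← htr, trace_mul_comm, ← mul_assoc, hUU', one_mul]
  obtain ⟨S, t, hS, htop, hge, hle⟩ := exists_topSum_eq_sum_eigenvalues hA hq1 hqp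
  rw [trace_mul_eq_sum_eigenvalues_mul hA, htop]
  exact sum_mul_le_sum_of_threshold hge hle (fun i => (hconj hQ).diag_nonneg) hc1 (hS ▸ hc)

theorem topSum_le_topSum_of_trace_mul_eq {B : Matrix (Fin p) (Fin p) ℝ} (hA : A.IsHermitian)
    (hB : B.IsHermitian) (Φ : Matrix (Fin p) (Fin p) ℝ →ₗ[ℝ] Matrix (Fin p) (Fin p) ℝ)
    (hΦ : ∀ Q, Q.PosSemidef → (Φ Q).PosSemidef) (hΦ1 : Φ 1 = 1)
    (hΦtr : ∀ Q, (Φ Q).trace = Q.trace) (hdual : ∀ Q, (Q * B).trace = (Φ Q * A).trace)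
    {q : ℕ} (hq1 : 1 ≤ q) (hqp : q ≤ p) :
    topSum B hB q ≤ topSum A hA q := by
  obtain ⟨S, -, hS, htop, -, -⟩ := exists_topSum_eq_sum_eigenvalues hB hq1 hqp
  obtain ⟨Q, hQ, hQ1, hQtr, hQB⟩ := exists_posSemidef_trace_mul_eq hB S
  have hΦQ1 : (1 - Φ Q).PosSemidef := by simpa [hΦ1] using hΦ _ hQ1
  calc topSum B hB q = (Q * B).trace := by rw [htop, hQB]
    _ = (Φ Q * A).trace := hdual Q
    _ ≤ topSum A hA q := trace_mul_le_topSum hA (hΦ Q hQ) hΦQ1 hq1 hqp (by rw [hΦtr, hQtr, hS])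

end TopSum

section HadamardConj

variable {n ι : Type*} [Fintype n] [Fintype ι]

theorem trace_hadamard_of_diag_eq_one {A B : Matrix n n ℝ} (hB : B.diag = 1) :
    (A ⊙ B).trace = A.trace := by
  have hB1 : ∀ i, B i i = 1 := congrFun hB
  simp [trace, hB1]

variable [DecidableEq n]

def hadamardConj (d : ι → n → ℝ) (M : ι → Matrix n n ℝ) :
    Matrix n n ℝ →ₗ[ℝ] Matrix n n ℝ where
  toFun Q := ∑ j, (diagonal (d j) * Q * diagonal (d j)) ⊙ M j
  map_add' Q R := by simp only [mul_add, add_mul, add_hadamard, sum_add_distrib]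
  map_smul' c Q := by simp only [mul_smul_comm, smul_mul_assoc, smul_hadamard, smul_sum,
    RingHom.id_apply]

variable {d : ι → n → ℝ} {M : ι → Matrix n n ℝ}

theorem hadamardConj_apply (Q : Matrix n n ℝ) :
    hadamardConj d M Q = ∑ j, (diagonal (d j) * Q * diagonal (d j)) ⊙ M j := rfl

theorem hadamardConj_posSemidef (hM : ∀ j, (M j).PosSemidef) {Q : Matrix n n ℝ}
    (hQ : Q.PosSemidef) : (hadamardConj d M Q).PosSemidef :=
  posSemidef_sum _ fun j _ =>
    PosSemidef.hadamard (by simpa using hQ.mul_mul_conjTranspose_same (diagonal (d j))) (hM j)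

theorem hadamardConj_one (hM : ∀ j, (M j).diag = 1) (hd : ∑ j, diagonal (d j) ^ 2 = 1) :
    hadamardConj d M 1 = 1 := by
  have h : ∀ j, (diagonal (d j) * 1 * diagonal (d j)) ⊙ M j = diagonal (d j) ^ 2 := fun j => by
    rw [mul_one, ← sq, diagonal_pow, diagonal_hadamard, hM, mul_one]
  simp only [hadamardConj_apply, h, hd]

theorem trace_hadamardConj (hM : ∀ j, (M j).diag = 1) (hd : ∑ j, diagonal (d j) ^ 2 = 1)
    (Q : Matrix n n ℝ) : (hadamardConj d M Q).trace = Q.trace := by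
  simp_rw [hadamardConj_apply, trace_sum, trace_hadamard_of_diag_eq_one (hM _),
    trace_mul_comm _ (diagonal _), ← mul_assoc, ← sq, ← trace_sum, ← sum_mul, hd, one_mul]

theorem trace_mul_sum_diagonal_mul_hadamard_mul (hM : ∀ j, (M j).IsSymm) (K Q : Matrix n n ℝ) :
    (Q * ∑ j, diagonal (d j) * (K ⊙ M j) * diagonal (d j)).trace =
      (hadamardConj d M Q * K).trace := by
  simp only [hadamardConj_apply, mul_sum, sum_mul, trace_sum]
  refine sum_congr rfl fun j _ => ?_
  simp only [trace, diag_apply, mul_apply (M := Q), mul_apply (N := K)]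
  simp only [mul_diagonal, diagonal_mul, hadamard_apply, (hM j).apply]
  exact sum_congr rfl fun a _ => sum_congr rfl fun b _ => by ring

end HadamardConj

section HadamardPow

variable {p : ℕ} {K : Matrix (Fin p) (Fin p) ℝ}

theorem hadamardPow_succ (K : Matrix (Fin p) (Fin p) ℝ) (j : ℕ) :
    hadamardPow K (j + 1) = K ⊙ hadamardPow K j := by
  ext a b
  simp [hadamardPow, pow_succ, mul_comm]

theorem hadamardPow_posSemidef (hK : K.PosSemidef) (j : ℕ) : (hadamardPow K j).PosSemidef := by
  induction j with
  | zero => simpa [hadamardPow, vecMulVec] using posSemidef_vecMulVec_self_star (1 : Fin p → ℝ)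
  | succ j ih => rw [hadamardPow_succ]; exact hK.hadamard ih

theorem diag_hadamardPow (hdiag : ∀ i, K i i = 1) (j : ℕ) : (hadamardPow K j).diag = 1 := by
  ext i
  simp [hadamardPow, hdiag]

end HadamardPow

theorem stmt6 {p N : ℕ} (K : Matrix (Fin p) (Fin p) ℝ) (hK : K.PosSemidef)
    (hdiag : ∀ i, K i i = 1)
    (D : Fin N → (Fin p → ℝ))
    (hD : ∑ j, Matrix.diagonal (D j) ^ 2 = (1 : Matrix (Fin p) (Fin p) ℝ))
    (X : Matrix (Fin p) (Fin p) ℝ)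
    (hX : X = ∑ j : Fin N,
      Matrix.diagonal (D j) * hadamardPow K ((j : ℕ) + 1) * Matrix.diagonal (D j))
    (hXh : X.IsHermitian) :
    (∀ q : ℕ, 1 ≤ q → q ≤ p → topSum X hXh q ≤ topSum K hK.1 q) ∧
    topSum X hXh p = topSum K hK.1 p := by
  set M : Fin N → Matrix (Fin p) (Fin p) ℝ := fun j => hadamardPow K j
  have hM : ∀ j, (M j).PosSemidef := fun j => hadamardPow_posSemidef hK j
  have hMdiag : ∀ j, (M j).diag = 1 := fun j => diag_hadamardPow hdiag j
  have hΦ1 : hadamardConj D M 1 = 1 := hadamardConj_one hMdiag hD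
  have hdual : ∀ Q, (Q * X).trace = (hadamardConj D M Q * K).trace := fun Q => by
    simp only [hX, hadamardPow_succ]
    exact trace_mul_sum_diagonal_mul_hadamard_mul
      (fun j => isHermitian_iff_isSymm.1 (hM j).isHermitian) K Q
  refine ⟨fun q hq1 hqp => topSum_le_topSum_of_trace_mul_eq hK.1 hXh (hadamardConj D M)
    (fun Q => hadamardConj_posSemidef hM) hΦ1 (trace_hadamardConj hMdiag hD) hdual hq1 hqp, ?_⟩
  rw [topSum_card_eq_trace, topSum_card_eq_trace, ← one_mul X, hdual, hΦ1, one_mul]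
end

section
/- If a Hermitian matrix A is a convex combination of unitary conjugates of a Hermitian matrix B, A = Σ_j t_j U_j B U_j* with t_j ≥ 0, Σ t_j = 1, then the eigenvalue vector of B majorizes that of A. -/
/-!
Conjugating by a unitary `W` that diagonalizes `A` turns the eigenvalues of `A` into the diagonal
entries of `W* A W = ∑ j, t j • P j * B * (P j)*` with `P j = W* U j` unitary. Take the indices `S`
of the `q` largest eigenvalues of `A`. Writing `B = Q D Q*`, the sum over `S` of the diagonal
entries of `P B P*` is `∑ k, μ k * d k`, where `μ` are the eigenvalues of `B` and
`d k = ∑ i ∈ S, |(P Q) i k|²`; unitarity of `P Q` gives `0 ≤ d k ≤ 1` and `∑ k, d k = q`, so this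
is at most the sum of the `q` largest `μ k`. Averaging over `j` gives the majorization.
-/

open Matrix

/-- Eigenvalues of a Hermitian complex matrix, sorted in decreasing order. -/
noncomputable def sortedEigsC {n : ℕ} (A : Matrix (Fin n) (Fin n) ℂ) (hA : A.IsHermitian) :
    List ℝ :=
  (List.ofFn hA.eigenvalues).mergeSort (· ≥ ·)

/-- Sum of the top `q` eigenvalues of a Hermitian complex matrix. -/
noncomputable def topSumC {n : ℕ} (A : Matrix (Fin n) (Fin n) ℂ) (hA : A.IsHermitian) (q : ℕ) :
    ℝ :=
  ((sortedEigsC A hA).take q).sum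

open Finset

section Sorting

variable {α : Type*} [LinearOrder α] {n : ℕ}

lemma Tuple.antitone_comp_revPerm_sort (f : Fin n → α) :
    Antitone (f ∘ Fin.revPerm.trans (Tuple.sort f)) := fun _ _ hab =>
  Tuple.monotone_sort f (Fin.rev_le_rev.mpr hab)

lemma List.mergeSort_ge_ofFn {f : Fin n → α} {σ : Equiv.Perm (Fin n)} (hσ : Antitone (f ∘ σ)) :
    (List.ofFn f).mergeSort (· ≥ ·) = List.ofFn (f ∘ σ) :=
  ((List.mergeSort_perm _ _).trans (σ.ofFn_comp_perm f).symm).eq_of_sortedGE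
    List.sortedGE_mergeSort hσ.sortedGE_ofFn

lemma exists_finset_sum_take_mergeSort_eq [AddCommMonoid α] (f : Fin n → α) {q : ℕ} (hq : 0 < q) (hqn : q ≤ n) :
    ∃ (S : Finset (Fin n)) (l : α), #S = q ∧
      (((List.ofFn f).mergeSort (· ≥ ·)).take q).sum = ∑ i ∈ S, f i ∧
      (∀ i ∈ S, l ≤ f i) ∧ ∀ i ∉ S, f i ≤ l := by
  set σ := Fin.revPerm.trans (Tuple.sort f)
  have hσ := Tuple.antitone_comp_revPerm_sort f
  let last : Fin n := ⟨q - 1, by omega⟩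
  refine ⟨univ.map ((Fin.castLEEmb hqn).trans σ.toEmbedding), f (σ last), by simp, ?_, ?_, ?_⟩
  · rw [List.mergeSort_ge_ofFn hσ, ← Fin.ofFn_take_eq_take_ofFn hqn, List.sum_ofFn, sum_map]
    rfl
  · simp only [mem_map, mem_univ, true_and, forall_exists_index]
    rintro _ k rfl
    exact hσ (show Fin.castLE hqn k ≤ last from Fin.le_def.mpr (by simp [last]; omega))
  · intro i hi
    obtain ⟨k, rfl⟩ := σ.surjective i
    refine hσ (Fin.le_def.mpr ?_)
    by_contra hk
    exact hi (mem_map.mpr ⟨⟨k, by simp [last] at hk; omega⟩, mem_univ _, rfl⟩)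

end Sorting

lemma sum_mul_le_sum_of_forall_le_of_forall_ge {ι : Type*} [Fintype ι] {f d : ι → ℝ}
    {S : Finset ι} {l : ℝ} (hS : ∀ i ∈ S, l ≤ f i) (hSc : ∀ i ∉ S, f i ≤ l)
    (hd0 : ∀ i, 0 ≤ d i) (hd1 : ∀ i, d i ≤ 1) (hd : ∑ i, d i = #S) :
    ∑ i, f i * d i ≤ ∑ i ∈ S, f i := by
  classical
  -- `∑ i ∈ S, f i - ∑ i, f i * d i = ∑ i, (f i - l) * (𝟙_S i - d i)`, a sum of nonnegative terms.
  have hterm : ∀ i, 0 ≤ (f i - l) * ((if i ∈ S then 1 else 0) - d i) := fun i => by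
    by_cases hi : i ∈ S
    · simp only [if_pos hi]; nlinarith [hS i hi, hd1 i]
    · simp only [if_neg hi]; nlinarith [hSc i hi, hd0 i]
  have hsum := sum_nonneg fun i (_ : i ∈ univ) => hterm i
  simp only [mul_sub, sub_mul, mul_ite, mul_one, mul_zero, sum_sub_distrib, ← mul_sum,
    sum_ite_mem, univ_inter, sum_const, nsmul_eq_mul, hd] at hsum
  linarith

namespace Matrix

variable {ι : Type*} [Fintype ι] [DecidableEq ι]

lemma re_mul_diagonal_mul_conjTranspose_apply_self (R : Matrix ι ι ℂ) (μ : ι → ℝ) (i : ι) :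
    ((R * diagonal (Complex.ofReal ∘ μ) * Rᴴ) i i).re = ∑ k, μ k * Complex.normSq (R i k) := by
  rw [mul_apply, Complex.re_sum]
  refine sum_congr rfl fun k _ => ?_
  rw [mul_diagonal, conjTranspose_apply, Function.comp_apply, Complex.star_def, mul_right_comm,
    Complex.mul_conj, ← Complex.ofReal_mul, Complex.ofReal_re, mul_comm]

lemma sum_normSq_row_of_mem_unitaryGroup {R : Matrix ι ι ℂ} (hR : R ∈ unitaryGroup ι ℂ)
    (i : ι) : ∑ k, Complex.normSq (R i k) = 1 := by
  have h := congrFun (congrFun (mem_unitaryGroup_iff.mp hR) i) i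
  simp only [mul_apply, star_apply, Complex.star_def, Complex.mul_conj, one_apply_eq] at h
  exact_mod_cast h

lemma sum_normSq_col_of_mem_unitaryGroup {R : Matrix ι ι ℂ} (hR : R ∈ unitaryGroup ι ℂ)
    (k : ι) : ∑ i, Complex.normSq (R i k) = 1 := by
  simpa using sum_normSq_row_of_mem_unitaryGroup (Unitary.star_mem hR) k

lemma trace_conj_of_mem_unitaryGroup {U : Matrix ι ι ℂ} (hU : U ∈ unitaryGroup ι ℂ)
    (B : Matrix ι ι ℂ) : (U * B * Uᴴ).trace = B.trace := by
  rw [trace_mul_cycle, ← star_eq_conjTranspose, mem_unitaryGroup_iff'.mp hU, Matrix.one_mul]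

lemma IsHermitian.eigenvalues_eq_re_star_mul_mul_apply {A : Matrix ι ι ℂ} (hA : A.IsHermitian)
    (i : ι) :
    hA.eigenvalues i =
      ((star (hA.eigenvectorUnitary : Matrix ι ι ℂ) * A * hA.eigenvectorUnitary) i i).re := by
  rw [← Unitary.conjStarAlgAut_star_apply (S := ℂ), hA.conjStarAlgAut_star_eigenvectorUnitary]
  simp

end Matrix

lemma sum_re_diag_conj_le_topSumC {n q : ℕ} {B P : Matrix (Fin n) (Fin n) ℂ}
    (hB : B.IsHermitian) (hP : P ∈ unitaryGroup (Fin n) ℂ) {S : Finset (Fin n)} (hS : #S = q)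
    (hq : 0 < q) (hqn : q ≤ n) :
    ∑ i ∈ S, ((P * B * Pᴴ) i i).re ≤ topSumC B hB q := by
  set R := P * (hB.eigenvectorUnitary : Matrix (Fin n) (Fin n) ℂ)
  have hR : R ∈ unitaryGroup (Fin n) ℂ := mul_mem hP hB.eigenvectorUnitary.2
  have hconj : P * B * Pᴴ = R * diagonal (Complex.ofReal ∘ hB.eigenvalues) * Rᴴ := by
    conv_lhs => rw [hB.spectral_theorem]
    simp [R, conjTranspose_mul, Matrix.mul_assoc, star_eq_conjTranspose]
  obtain ⟨T, l, hT, htop, hTl, hTcl⟩ := exists_finset_sum_take_mergeSort_eq hB.eigenvalues hq hqn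
  calc ∑ i ∈ S, ((P * B * Pᴴ) i i).re
      = ∑ k, hB.eigenvalues k * ∑ i ∈ S, Complex.normSq (R i k) := by
        simp_rw [hconj, re_mul_diagonal_mul_conjTranspose_apply_self, mul_sum]
        exact sum_comm
    _ ≤ ∑ k ∈ T, hB.eigenvalues k := by
        refine sum_mul_le_sum_of_forall_le_of_forall_ge hTl hTcl
          (fun k => sum_nonneg fun i _ => Complex.normSq_nonneg _) (fun k => ?_) ?_
        · rw [← sum_normSq_col_of_mem_unitaryGroup hR k]
          exact sum_le_univ_sum_of_nonneg fun i => Complex.normSq_nonneg _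
        · rw [sum_comm]
          simp [sum_normSq_row_of_mem_unitaryGroup hR, hS, hT]
    _ = topSumC B hB q := htop.symm

lemma sum_re_diag_sum_smul_conj_le_topSumC {n q : ℕ} {κ : Type*} [Fintype κ]
    {B : Matrix (Fin n) (Fin n) ℂ} (hB : B.IsHermitian) {P : κ → Matrix (Fin n) (Fin n) ℂ}
    (hP : ∀ j, P j ∈ unitaryGroup (Fin n) ℂ) {t : κ → ℝ} (ht0 : ∀ j, 0 ≤ t j)
    (ht1 : ∑ j, t j = 1) {S : Finset (Fin n)} (hS : #S = q) (hq : 0 < q) (hqn : q ≤ n) :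
    ∑ i ∈ S, ((∑ j, (t j : ℂ) • (P j * B * (P j)ᴴ)) i i).re ≤ topSumC B hB q :=
  calc ∑ i ∈ S, ((∑ j, (t j : ℂ) • (P j * B * (P j)ᴴ)) i i).re
      = ∑ j, t j * ∑ i ∈ S, ((P j * B * (P j)ᴴ) i i).re := by
        simp only [Matrix.sum_apply, Matrix.smul_apply, Complex.re_sum, smul_eq_mul,
          Complex.re_ofReal_mul, mul_sum]
        exact sum_comm
    _ ≤ ∑ j, t j * topSumC B hB q := by
        gcongr with j
        · exact ht0 j
        · exact sum_re_diag_conj_le_topSumC hB (hP j) hS hq hqn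
    _ = topSumC B hB q := by rw [← sum_mul, ht1, one_mul]

theorem stmt8 {n N : ℕ} (A B : Matrix (Fin n) (Fin n) ℂ)
    (hA : A.IsHermitian) (hB : B.IsHermitian)
    (U : Fin N → Matrix (Fin n) (Fin n) ℂ)
    (hU : ∀ j, U j ∈ Matrix.unitaryGroup (Fin n) ℂ)
    (t : Fin N → ℝ) (ht0 : ∀ j, 0 ≤ t j) (ht1 : ∑ j, t j = 1)
    (hAB : A = ∑ j, (t j : ℂ) • (U j * B * (U j)ᴴ)) :
    (∀ q : ℕ, 1 ≤ q → q ≤ n → topSumC A hA q ≤ topSumC B hB q) ∧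
    A.trace = B.trace := by
  refine ⟨fun q hq hqn => ?_, ?_⟩
  · set W : Matrix (Fin n) (Fin n) ℂ := (hA.eigenvectorUnitary : Matrix (Fin n) (Fin n) ℂ)
    have hWAW : star W * A * W = ∑ j, (t j : ℂ) • ((star W * U j) * B * (star W * U j)ᴴ) := by
      rw [hAB]
      simp [mul_sum, sum_mul, conjTranspose_mul, Matrix.mul_assoc, star_eq_conjTranspose]
    obtain ⟨S, -, hS, htop, -, -⟩ := exists_finset_sum_take_mergeSort_eq hA.eigenvalues hq hqn
    calc topSumC A hA q = ∑ i ∈ S, ((star W * A * W) i i).re :=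
          htop.trans (sum_congr rfl fun i _ => hA.eigenvalues_eq_re_star_mul_mul_apply i)
      _ ≤ topSumC B hB q := hWAW ▸ sum_re_diag_sum_smul_conj_le_topSumC hB
          (fun j => mul_mem (Unitary.star_mem hA.eigenvectorUnitary.2) (hU j)) ht0 ht1 hS hq hqn
  · simp_rw [hAB, trace_sum, trace_smul, trace_conj_of_mem_unitaryGroup (hU _), smul_eq_mul,
      ← sum_mul]
    rw [← Complex.ofReal_sum, ht1, Complex.ofReal_one, one_mul]
end
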